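/- Let y_0 ∈ ℝ^{d-r} satisfy (R₂^T)^m y_0 ≡ y_0 (mod ℤ^{d-r}) for some integer m ≥ 1, where R₂ is an expansive (d-r)×(d-r) integer matrix, and suppose y_j := (R₂^T)^j y_0 ∉ ℤ^{d-r} for 1 ≤ j ≤ m. Then Γ := {x ∈ ℤ^{d-r} : ⟨x, (R₂^T)^{-1} y_j⟩ ∈ ℤ for all 1 ≤ j ≤ m} is a full-rank proper sublattice of ℤ^{d-r}, it satisfies R₂(Γ) ⊆ Γ, and hence Γ = Q(ℤ^{d-r}) for an integer matrix Q with |det Q| ≥ 2 such that R₂ Q = Q R̃₂ for some integer matrix R̃₂. -/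

import Mathlib

open scoped BigOperators
open Matrix

noncomputable section

/-- Cast of an integer matrix to a real matrix. -/
def mR {e : ℕ} (R : Matrix (Fin e) (Fin e) ℤ) : Matrix (Fin e) (Fin e) ℝ :=
  R.map (Int.cast : ℤ → ℝ)

/-- Cast of an integer vector to a real vector. -/
def vR {e : ℕ} (b : Fin e → ℤ) : Fin e → ℝ := fun i => (b i : ℝ)

/-- The standard inner product on ℝ^e. -/
def ip {e : ℕ} (x y : Fin e → ℝ) : ℝ := ∑ i, x i * y i

/-- A matrix is expansive if all of its complex eigenvalues have modulus > 1. -/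
def Expansive {e : ℕ} (R : Matrix (Fin e) (Fin e) ℤ) : Prop :=
  ∀ z ∈ spectrum ℂ (R.map (Int.cast : ℤ → ℂ)), 1 < ‖z‖

/-- Γ = {x ∈ ℤ^e : ⟨x, (R₂ᵀ)⁻¹ y_j⟩ ∈ ℤ for 1 ≤ j ≤ m}, where y_j = (R₂ᵀ)^j y₀. -/
def Gamma {e : ℕ} (R2 : Matrix (Fin e) (Fin e) ℤ) (y0 : Fin e → ℝ) (m : ℕ) :
    Set (Fin e → ℤ) :=
  {x | ∀ j : ℕ, 1 ≤ j → j ≤ m →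
    ∃ z : ℤ, ip (vR x) (((mR R2)ᵀ)⁻¹.mulVec (((mR R2)ᵀ ^ j).mulVec y0)) = (z : ℝ)}

/-!
`(R₂ᵀ)⁻¹` shifts `y_j` back to `y_{j-1}`, so `Γ` is the set of integer vectors pairing integrally
with `y_0, …, y_{m-1}`. Moving `R₂` across the pairing shifts these indices up by one, and
`y_m ≡ y_0` closes the cycle, so `R₂ Γ ⊆ Γ`. An expansive matrix has no root of unity as an
eigenvalue, so `(R₂ᵀ)^m - 1` is invertible; it maps `y_0` to an integer vector, hence
`c = det((R₂ᵀ)^m - 1)` makes every `c • y_j` integral and `c ℤ^e ⊆ Γ`. Thus `Γ` has finite index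
and a basis of `e` vectors, whose matrix `Q` satisfies `|det Q| = [ℤ^e : Γ] ≥ 2`, the index being
`> 1` because `y_0 ∉ ℤ^e`. Applying `R₂` to the columns of `Q` gives `R₂ Q = Q R̃₂`.
-/

namespace AddSubgroup

variable {M : Type*} [AddCommGroup M] [Module.Free ℤ M] [Module.Finite ℤ M]

theorem finiteIndex_of_zsmul_mem (N : AddSubgroup M) {c : ℤ} (hc : c ≠ 0)
    (hN : ∀ x, c • x ∈ N) : N.FiniteIndex := by
  have : (nsmulAddMonoidHom (α := M) c.natAbs).range.FiniteIndex :=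
    ⟨by simpa [index_range_nsmul] using fun h => absurd h hc⟩
  refine finiteIndex_of_le (H := (nsmulAddMonoidHom (α := M) c.natAbs).range) ?_
  rintro _ ⟨x, rfl⟩
  rw [nsmulAddMonoidHom_apply, ← natCast_zsmul, ← Int.sign_mul_self, mul_zsmul]
  exact zsmul_mem (hN x) _

theorem exists_range_mulVec_eq {e : ℕ} (N : AddSubgroup (Fin e → ℤ)) [N.FiniteIndex] :
    ∃ Q : Matrix (Fin e) (Fin e) ℤ, Set.range Q.mulVec = N ∧ |Q.det| = N.index := by
  let b := Module.finBasisOfFinrankEq ℤ N.toIntSubmodule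
    (N.finrank_eq_of_finiteIndex.trans (Module.finrank_fin_fun ℤ))
  refine ⟨(of fun j => (b j : Fin e → ℤ))ᵀ, ?_, ?_⟩
  · have hspan : Submodule.span ℤ (Set.range fun j => (b j : Fin e → ℤ)) = N.toIntSubmodule := by
      rw [Set.range_comp', ← Submodule.coe_subtype, Submodule.span_image, b.span_eq,
        Submodule.map_subtype_top]
    rw [← coe_mulVecLin, ← LinearMap.coe_range, range_mulVecLin]
    exact congrArg SetLike.coe hspan
  · rw [index_eq_natAbs_det (Pi.basisFun ℤ (Fin e)) N b, Pi.basisFun_det_apply, det_transpose,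
      Int.natCast_natAbs]
    rfl

end AddSubgroup

theorem Matrix.exists_mul_eq_mul_of_mapsTo {n α : Type*} [Fintype n] [DecidableEq n]
    [CommSemiring α] (R Q : Matrix n n α)
    (h : Set.MapsTo R.mulVec (Set.range Q.mulVec) (Set.range Q.mulVec)) :
    ∃ Rt : Matrix n n α, R * Q = Q * Rt := by
  choose r hr using fun j => h (Set.mem_range_self (Pi.single j 1))
  refine ⟨(of r)ᵀ, ext_of_mulVec_single fun j => ?_⟩
  rw [← mulVec_mulVec, ← mulVec_mulVec, ← hr, mulVec_single_one]
  rfl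

theorem Matrix.isUnit_map_intCast_iff {n K : Type*} [Fintype n] [DecidableEq n] [Field K]
    [CharZero K] (M : Matrix n n ℤ) : IsUnit (M.map (Int.cast : ℤ → K)) ↔ M.det ≠ 0 := by
  rw [isUnit_iff_isUnit_det, ← Int.cast_det, isUnit_iff_ne_zero, Int.cast_ne_zero]

namespace Expansive

variable {e : ℕ} {R : Matrix (Fin e) (Fin e) ℤ}

theorem det_ne_zero (hR : Expansive R) : R.det ≠ 0 := by
  rw [← R.isUnit_map_intCast_iff (K := ℂ)]
  by_contra h
  have := hR 0 (spectrum.zero_mem_iff ℂ |>.mpr h)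
  norm_num at this

theorem det_pow_sub_one_ne_zero (hR : Expansive R) {m : ℕ} (hm : m ≠ 0) :
    (R ^ m - 1).det ≠ 0 := by
  have hmap : (R ^ m - 1).map (Int.cast : ℤ → ℂ) = R.map (Int.cast : ℤ → ℂ) ^ m - 1 := by
    change (Int.castRingHom ℂ).mapMatrix (R ^ m - 1) = (Int.castRingHom ℂ).mapMatrix R ^ m - 1
    rw [map_sub, map_pow, map_one]
  rw [← isUnit_map_intCast_iff (K := ℂ), hmap]
  by_contra h
  have h1 : (1 : ℂ) ∈ spectrum ℂ (R.map (Int.cast : ℤ → ℂ) ^ m) := by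
    rwa [spectrum.mem_iff, map_one, ← IsUnit.neg_iff, neg_sub]
  rw [spectrum.map_pow_of_pos _ (Nat.pos_of_ne_zero hm)] at h1
  obtain ⟨z, hz, hz1 : z ^ m = 1⟩ := h1
  have := one_lt_pow₀ (hR z hz) hm
  rw [← norm_pow, hz1, norm_one] at this
  exact this.false

end Expansive

section Casts

variable {e : ℕ}

theorem mR_transpose (R : Matrix (Fin e) (Fin e) ℤ) : mR Rᵀ = (mR R)ᵀ := rfl

theorem mR_pow (R : Matrix (Fin e) (Fin e) ℤ) (n : ℕ) : mR (R ^ n) = mR R ^ n :=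
  map_pow (Int.castRingHom ℝ).mapMatrix R n

theorem mR_pow_sub_one (R : Matrix (Fin e) (Fin e) ℤ) (n : ℕ) :
    mR (R ^ n - 1) = mR R ^ n - 1 := by
  change (Int.castRingHom ℝ).mapMatrix (R ^ n - 1) = (Int.castRingHom ℝ).mapMatrix R ^ n - 1
  rw [map_sub, map_pow, map_one]

theorem det_mR (R : Matrix (Fin e) (Fin e) ℤ) : (mR R).det = R.det := (Int.cast_det R).symm

theorem mR_mulVec_vR (P : Matrix (Fin e) (Fin e) ℤ) (u : Fin e → ℤ) :
    mR P *ᵥ vR u = vR (P *ᵥ u) := by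
  funext i
  simp [mR, vR, mulVec, dotProduct]

theorem ip_vR_vR (x u : Fin e → ℤ) : ip (vR x) (vR u) = ((x ⬝ᵥ u : ℤ) : ℝ) := by
  simp [ip, vR, dotProduct]

theorem ip_add_right (x u v : Fin e → ℝ) : ip x (u + v) = ip x u + ip x v :=
  dotProduct_add x u v

theorem ip_mulVec_left (M : Matrix (Fin e) (Fin e) ℝ) (u v : Fin e → ℝ) :
    ip (M *ᵥ u) v = ip u (Mᵀ *ᵥ v) := by
  change (M *ᵥ u) ⬝ᵥ v = u ⬝ᵥ (Mᵀ *ᵥ v)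
  rw [dotProduct_mulVec, vecMul_transpose]

theorem ip_vR_add_left (a b : Fin e → ℤ) (v : Fin e → ℝ) :
    ip (vR (a + b)) v = ip (vR a) v + ip (vR b) v := by
  simp [ip, vR, add_mul, Finset.sum_add_distrib]

theorem ip_vR_neg_left (a : Fin e → ℤ) (v : Fin e → ℝ) : ip (vR (-a)) v = -ip (vR a) v := by
  simp [ip, vR]

theorem ip_vR_zsmul_left (c : ℤ) (a : Fin e → ℤ) (v : Fin e → ℝ) :
    ip (vR (c • a)) v = ip (vR a) ((c : ℝ) • v) := by
  simp only [ip, vR, Pi.smul_apply, smul_eq_mul, Int.cast_mul]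
  exact Finset.sum_congr rfl fun i _ => by ring

theorem ip_vR_single_left (i : Fin e) (v : Fin e → ℝ) : ip (vR (Pi.single i 1)) v = v i := by
  simp [ip, vR, Pi.single_apply]

theorem det_smul_eq_vR_of_mulVec_eq_vR {M : Matrix (Fin e) (Fin e) ℤ} {y : Fin e → ℝ}
    {k : Fin e → ℤ} (h : mR M *ᵥ y = vR k) : (M.det : ℝ) • y = vR (M.adjugate *ᵥ k) := by
  have hadj : mR M.adjugate * mR M = (M.det : ℝ) • 1 := by
    rw [← det_mR, ← adjugate_mul]
    exact congrArg (· * mR M) ((Int.castRingHom ℝ).map_adjugate M)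
  rw [← mR_mulVec_vR, ← h, mulVec_mulVec, hadj, smul_mulVec, one_mulVec]

end Casts

def gammaAddSubgroup {e : ℕ} (R2 : Matrix (Fin e) (Fin e) ℤ) (y0 : Fin e → ℝ) (m : ℕ) :
    AddSubgroup (Fin e → ℤ) where
  carrier := Gamma R2 y0 m
  add_mem' {a b} ha hb j h1 h2 := by
    obtain ⟨z1, hz1⟩ := ha j h1 h2
    obtain ⟨z2, hz2⟩ := hb j h1 h2
    exact ⟨z1 + z2, by rw [ip_vR_add_left, hz1, hz2, Int.cast_add]⟩
  zero_mem' _ _ _ := ⟨0, by simp [ip, vR]⟩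
  neg_mem' {a} ha j h1 h2 := by
    obtain ⟨z, hz⟩ := ha j h1 h2
    exact ⟨-z, by rw [ip_vR_neg_left, hz, Int.cast_neg]⟩

section Gamma

variable {e : ℕ} {R2 : Matrix (Fin e) (Fin e) ℤ} {y0 : Fin e → ℝ} {m : ℕ}

theorem mem_Gamma_iff (hR : R2.det ≠ 0) {x : Fin e → ℤ} :
    x ∈ Gamma R2 y0 m ↔ ∀ j < m, ∃ z : ℤ, ip (vR x) (((mR R2)ᵀ ^ j) *ᵥ y0) = z := by
  have hA : IsUnit (mR R2)ᵀ.det := by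
    rw [det_transpose, det_mR, isUnit_iff_ne_zero]
    exact_mod_cast hR
  have hshift (j : ℕ) : ((mR R2)ᵀ)⁻¹ *ᵥ (((mR R2)ᵀ ^ (j + 1)) *ᵥ y0) = ((mR R2)ᵀ ^ j) *ᵥ y0 := by
    rw [mulVec_mulVec, pow_succ', ← mul_assoc, nonsing_inv_mul _ hA, one_mul]
  refine ⟨fun h j hj => ?_, fun h j h1 h2 => ?_⟩
  · simpa only [hshift] using h (j + 1) (by omega) (by omega)
  · obtain ⟨j, rfl⟩ := Nat.exists_eq_add_of_le' h1
    simpa only [hshift] using h j (by omega)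

variable {k0 : Fin e → ℤ}

theorem zsmul_mem_Gamma (hR : R2.det ≠ 0) (hk0 : ((mR R2)ᵀ ^ m) *ᵥ y0 = y0 + vR k0)
    (x : Fin e → ℤ) : (R2ᵀ ^ m - 1).det • x ∈ Gamma R2 y0 m := by
  have hy0 : ((R2ᵀ ^ m - 1).det : ℝ) • y0 = vR ((R2ᵀ ^ m - 1).adjugate *ᵥ k0) := by
    apply det_smul_eq_vR_of_mulVec_eq_vR
    rw [mR_pow_sub_one, mR_transpose, sub_mulVec, one_mulVec, hk0, add_sub_cancel_left]
  refine (mem_Gamma_iff hR).mpr fun j _ => ⟨x ⬝ᵥ (R2ᵀ ^ j *ᵥ (R2ᵀ ^ m - 1).adjugate *ᵥ k0), ?_⟩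
  rw [ip_vR_zsmul_left, ← mulVec_smul, hy0, ← mR_transpose, ← mR_pow, mR_mulVec_vR, ip_vR_vR]

theorem Gamma_ne_univ (hR : R2.det ≠ 0) (hm : 1 ≤ m) (hk0 : ((mR R2)ᵀ ^ m) *ᵥ y0 = y0 + vR k0)
    (hnint : ¬∃ k : Fin e → ℤ, ((mR R2)ᵀ ^ m) *ᵥ y0 = vR k) : Gamma R2 y0 m ≠ Set.univ := by
  obtain ⟨i, hi⟩ : ∃ i, ∀ z : ℤ, y0 i ≠ z := by
    by_contra! h
    choose k hk using h
    exact hnint ⟨k + k0, by rw [hk0]; funext i; simp [vR, hk]⟩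
  intro huniv
  obtain ⟨z, hz⟩ := (mem_Gamma_iff hR).mp (huniv ▸ Set.mem_univ (Pi.single i 1)) 0 hm
  rw [pow_zero, one_mulVec, ip_vR_single_left] at hz
  exact hi z hz

theorem mulVec_mem_Gamma (hR : R2.det ≠ 0) (hk0 : ((mR R2)ᵀ ^ m) *ᵥ y0 = y0 + vR k0)
    {x : Fin e → ℤ} (hx : x ∈ Gamma R2 y0 m) : R2 *ᵥ x ∈ Gamma R2 y0 m := by
  rw [mem_Gamma_iff hR] at hx ⊢
  intro j hj
  have hshift : ip (vR (R2 *ᵥ x)) (((mR R2)ᵀ ^ j) *ᵥ y0)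
      = ip (vR x) (((mR R2)ᵀ ^ (j + 1)) *ᵥ y0) := by
    rw [← mR_mulVec_vR, ip_mulVec_left, mulVec_mulVec, pow_succ']
  rw [hshift]
  rcases (Nat.succ_le_of_lt hj).lt_or_eq with hlt | rfl
  · exact hx (j + 1) hlt
  · obtain ⟨z, hz⟩ := hx 0 (Nat.succ_pos j)
    rw [pow_zero, one_mulVec] at hz
    exact ⟨z + x ⬝ᵥ k0, by rw [hk0, ip_add_right, hz, ip_vR_vR, Int.cast_add]⟩

end Gamma

/-- structure of the lattice Γ. -/
theorem gamma_lattice_structure {e : ℕ} (R2 : Matrix (Fin e) (Fin e) ℤ)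
    (hR2 : Expansive R2) (y0 : Fin e → ℝ) (m : ℕ) (hm : 1 ≤ m)
    (hper : ∃ k : Fin e → ℤ, ((mR R2)ᵀ ^ m).mulVec y0 = y0 + vR k)
    (hnint : ∀ j : ℕ, 1 ≤ j → j ≤ m →
      ¬ ∃ k : Fin e → ℤ, ((mR R2)ᵀ ^ j).mulVec y0 = vR k) :
    (∃ c : ℤ, c ≠ 0 ∧ ∀ x : Fin e → ℤ, c • x ∈ Gamma R2 y0 m) ∧
    Gamma R2 y0 m ≠ Set.univ ∧
    (∀ x ∈ Gamma R2 y0 m, R2.mulVec x ∈ Gamma R2 y0 m) ∧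
    ∃ Q : Matrix (Fin e) (Fin e) ℤ,
      Gamma R2 y0 m = {y | ∃ k : Fin e → ℤ, y = Q.mulVec k} ∧
      2 ≤ |Q.det| ∧
      ∃ Rt : Matrix (Fin e) (Fin e) ℤ, R2 * Q = Q * Rt := by
  obtain ⟨k0, hk0⟩ := hper
  have hR := hR2.det_ne_zero
  have hc : (R2ᵀ ^ m - 1).det ≠ 0 := by
    rw [← transpose_pow, ← transpose_one, ← transpose_sub, det_transpose]
    exact hR2.det_pow_sub_one_ne_zero (by omega)
  have hsmul := zsmul_mem_Gamma hR hk0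
  have hne := Gamma_ne_univ hR hm hk0 (hnint m hm le_rfl)
  have hinv : ∀ x ∈ Gamma R2 y0 m, R2 *ᵥ x ∈ Gamma R2 y0 m := fun _ => mulVec_mem_Gamma hR hk0
  let N := gammaAddSubgroup R2 y0 m
  have : N.FiniteIndex := N.finiteIndex_of_zsmul_mem hc hsmul
  obtain ⟨Q, hQ, hQdet⟩ := N.exists_range_mulVec_eq
  have hNQ : Gamma R2 y0 m = Set.range Q.mulVec := hQ.symm
  refine ⟨⟨_, hc, hsmul⟩, hne, hinv, Q, ?_, ?_, ?_⟩
  · rw [hNQ]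
    ext y
    exact exists_congr fun k => eq_comm
  · have hNtop : N ≠ ⊤ := fun h => hne (congrArg SetLike.coe h)
    rw [hQdet]
    exact_mod_cast N.one_lt_index_of_ne_top hNtop
  · exact R2.exists_mul_eq_mul_of_mapsTo Q (hNQ ▸ hinv)
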